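/- arXiv:2402.16703 — 6 statements merged into one kernel-verified Lean document; each statement's English description precedes it below -/
import Mathlib

section
/- For all n ≥ 0, if |x| ≥ 2 then sgn(x)^n · S_n(x) = |S_n(x)| and sgn(x)^n · x · S_{n-1}(x) ≥ 2·|S_{n-1}(x)|. -/
/-!
Twisting by the sign, `a k := sgn(x)^k S_k(x)` satisfies `a (k+2) = |x| a (k+1) - a k` with
`a 0 = 1 ≤ |x| = a 1`. For a coefficient `c ≥ 2` such a recurrence keeps the sequence
nonnegative and nondecreasing, since `a (k+2) - a (k+1) ≥ a (k+1) - a k + (c - 2) a (k+1)`.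
Hence `a k = |S_k(x)|`, and `sgn(x)^{k+1} x S_k(x) = |x| a k ≥ 2 |S_k(x)|`.
-/

namespace Real

theorem sign_mul_self_eq_abs (x : ℝ) : sign x * x = |x| := by
  rcases lt_trichotomy x 0 with hx | rfl | hx
  · rw [sign_of_neg hx, abs_of_neg hx]; ring
  · simp
  · rw [sign_of_pos hx, abs_of_pos hx, one_mul]

theorem abs_sign_of_ne_zero {x : ℝ} (hx : x ≠ 0) : |sign x| = 1 := by
  rcases sign_apply_eq_of_ne_zero x hx with h | h <;> simp [h]

theorem sign_sq_of_ne_zero {x : ℝ} (hx : x ≠ 0) : sign x ^ 2 = 1 := by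
  rw [← sq_abs, abs_sign_of_ne_zero hx, one_pow]

end Real

theorem nonneg_and_le_succ_of_recurrence {c : ℝ} (hc : 2 ≤ c) {a : ℕ → ℝ}
    (hrec : ∀ k, a (k + 2) = c * a (k + 1) - a k) (h0 : 0 ≤ a 0) (h01 : a 0 ≤ a 1) (k : ℕ) :
    0 ≤ a k ∧ a k ≤ a (k + 1) := by
  induction k with
  | zero => exact ⟨h0, h01⟩
  | succ k ih =>
    obtain ⟨hk, hk1⟩ := ih
    have hk1_nonneg : 0 ≤ a (k + 1) := hk.trans hk1
    refine ⟨hk1_nonneg, ?_⟩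
    rw [hrec k]
    nlinarith

section Chebyshev

variable (S : ℤ → ℝ → ℝ) (hSm1 : ∀ x : ℝ, S (-1) x = 0) (hS0 : ∀ x : ℝ, S 0 x = 1)
  (hrec : ∀ (n : ℤ) (x : ℝ), S (n + 1) x = x * S n x - S (n - 1) x)

include hSm1 hS0 hrec in
theorem chebyshev_one (x : ℝ) : S 1 x = x := by
  simpa [hS0, hSm1] using hrec 0 x

include hrec in
theorem sign_pow_mul_chebyshev_recurrence {x : ℝ} (hx : x ≠ 0) (k : ℕ) :
    Real.sign x ^ (k + 2) * S (k + 2 : ℕ) x =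
      |x| * (Real.sign x ^ (k + 1) * S (k + 1 : ℕ) x) - Real.sign x ^ k * S k x := by
  have h := hrec (k + 1) x
  rw [add_assoc, one_add_one_eq_two, add_sub_cancel_right] at h
  push_cast
  rw [h, ← Real.sign_mul_self_eq_abs]
  linear_combination (-(Real.sign x ^ k * S k x)) * Real.sign_sq_of_ne_zero hx

include hSm1 hS0 hrec in
theorem sign_pow_mul_chebyshev_nonneg {x : ℝ} (hx : 2 ≤ |x|) (k : ℕ) :
    0 ≤ Real.sign x ^ k * S k x := by
  have hx0 : x ≠ 0 := by rintro rfl; norm_num at hx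
  refine (nonneg_and_le_succ_of_recurrence (a := fun k : ℕ => Real.sign x ^ k * S k x) hx
    (sign_pow_mul_chebyshev_recurrence S hrec hx0) ?_ ?_ k).1
  · simp [hS0]
  · simp [hS0, chebyshev_one S hSm1 hS0 hrec, Real.sign_mul_self_eq_abs]
    linarith

include hSm1 hS0 hrec in
theorem sign_pow_mul_chebyshev_eq_abs {x : ℝ} (hx : 2 ≤ |x|) (k : ℕ) :
    Real.sign x ^ k * S k x = |S k x| := by
  have hx0 : x ≠ 0 := by rintro rfl; norm_num at hx
  rw [← abs_of_nonneg (sign_pow_mul_chebyshev_nonneg S hSm1 hS0 hrec hx k), abs_mul, abs_pow,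
    Real.abs_sign_of_ne_zero hx0, one_pow, one_mul]

end Chebyshev

/-- For all `n ≥ 0`, if `|x| ≥ 2` then
`sgn(x)^n · S_n(x) = |S_n(x)|` and `sgn(x)^n · x · S_{n-1}(x) ≥ 2 · |S_{n-1}(x)|`,
where `S : ℤ → ℝ → ℝ` is the family of dilated Chebyshev polynomials of the second
kind (`S_{-1} = 0`, `S_0 = 1`, `S_{n+1}(x) = x S_n(x) - S_{n-1}(x)`). -/
theorem chebyshev_abs_ge_two
    (S : ℤ → ℝ → ℝ)
    (hSm1 : ∀ x : ℝ, S (-1) x = 0)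
    (hS0 : ∀ x : ℝ, S 0 x = 1)
    (hrec : ∀ (n : ℤ) (x : ℝ), S (n + 1) x = x * S n x - S (n - 1) x)
    (n : ℕ) (x : ℝ) (hx : 2 ≤ |x|) :
    (Real.sign x) ^ n * S (n : ℤ) x = |S (n : ℤ) x| ∧
    (Real.sign x) ^ n * (x * S ((n : ℤ) - 1) x) ≥ 2 * |S ((n : ℤ) - 1) x| := by
  have sign_pow_mul_eq_abs := sign_pow_mul_chebyshev_eq_abs S hSm1 hS0 hrec hx
  refine ⟨sign_pow_mul_eq_abs n, ?_⟩
  cases n with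
  | zero => simp [hSm1]
  | succ k =>
    rw [Nat.cast_succ, add_sub_cancel_right]
    calc Real.sign x ^ (k + 1) * (x * S k x)
        = |x| * (Real.sign x ^ k * S k x) := by rw [← Real.sign_mul_self_eq_abs]; ring
      _ = |x| * |S k x| := by rw [sign_pow_mul_eq_abs]
      _ ≥ 2 * |S k x| := by gcongr
end

section
/- For all n ≥ 0, if |x| ≥ 2 then sgn(x)^n · (S_n(x) - (x/2)·S_{n-1}(x)) ≥ 1, and if moreover |x| > 2 and n ≥ 1 then the inequality is strict. -/
/-- For all `n ≥ 0`, if `|x| ≥ 2` then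
`sgn(x)^n · (S_n(x) - (x/2)·S_{n-1}(x)) ≥ 1`, and if moreover `|x| > 2` and `n ≥ 1`
then the inequality is strict. Here `S : ℤ → ℝ → ℝ` is the family of dilated
Chebyshev polynomials of the second kind (`S_{-1} = 0`, `S_0 = 1`,
`S_{n+1}(x) = x S_n(x) - S_{n-1}(x)`). -/
theorem chebyshev_combination_ge_one
    (S : ℤ → ℝ → ℝ)
    (hSm1 : ∀ x : ℝ, S (-1) x = 0)
    (hS0 : ∀ x : ℝ, S 0 x = 1)
    (hrec : ∀ (n : ℤ) (x : ℝ), S (n + 1) x = x * S n x - S (n - 1) x)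
    (n : ℕ) (x : ℝ) (hx : 2 ≤ |x|) :
    (Real.sign x) ^ n * (S (n : ℤ) x - x / 2 * S ((n : ℤ) - 1) x) ≥ 1 ∧
    (2 < |x| → 1 ≤ n →
      (Real.sign x) ^ n * (S (n : ℤ) x - x / 2 * S ((n : ℤ) - 1) x) > 1) := by
  have hx0 : x ≠ 0 := by
    intro h; rw [h] at hx; simp at hx; linarith
  set a := Real.sign x with ha
  have hax : a * x = |x| := by
    rcases lt_or_gt_of_ne hx0 with h | h
    · rw [ha, Real.sign_of_neg h, abs_of_neg h]; ring
    · rw [ha, Real.sign_of_pos h, abs_of_pos h]; ring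
  have ha2 : a * a = 1 := by
    rcases lt_or_gt_of_ne hx0 with h | h
    · rw [ha, Real.sign_of_neg h]; norm_num
    · rw [ha, Real.sign_of_pos h]; norm_num
  set f : ℕ → ℝ := fun n => a ^ n * (S (n : ℤ) x - x / 2 * S ((n : ℤ) - 1) x) with hf
  have hf0 : f 0 = 1 := by
    simp [hf, hS0 x, hSm1 x]
  have hS1 : S 1 x = x := by
    have := hrec 0 x
    simpa [hS0 x, hSm1 x] using this
  have hf1 : f 1 = |x| / 2 := by
    have : f 1 = a * (x - x / 2 * 1) := by simp [hf, hS1, hS0 x]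
    rw [this]
    have : a * (x - x / 2 * 1) = (a * x) / 2 := by ring
    rw [this, hax]
  have hrecf : ∀ m : ℕ, f (m + 2) = |x| * f (m + 1) - f m := by
    intro m
    have e1 : S ((m : ℤ) + 2) x = x * S ((m : ℤ) + 1) x - S (m : ℤ) x := by
      have := hrec ((m : ℤ) + 1) x
      rw [show (m : ℤ) + 2 = (m : ℤ) + 1 + 1 by ring]
      simpa using this
    have e2 : S ((m : ℤ) + 1) x = x * S (m : ℤ) x - S ((m : ℤ) - 1) x := hrec m x
    have hcast2 : ((m + 2 : ℕ) : ℤ) = (m : ℤ) + 2 := by push_cast; ring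
    have hcast1 : ((m + 1 : ℕ) : ℤ) = (m : ℤ) + 1 := by push_cast; ring
    show a ^ (m + 2) * (S ((m + 2 : ℕ) : ℤ) x - x / 2 * S (((m + 2 : ℕ) : ℤ) - 1) x)
        = |x| * (a ^ (m + 1) * (S ((m + 1 : ℕ) : ℤ) x - x / 2 * S (((m + 1 : ℕ) : ℤ) - 1) x))
          - a ^ m * (S ((m : ℕ) : ℤ) x - x / 2 * S (((m : ℕ) : ℤ) - 1) x)
    rw [hcast2, hcast1]
    have h21 : (m : ℤ) + 2 - 1 = (m : ℤ) + 1 := by ring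
    rw [h21, e1, e2, ← hax]
    have haval : a = 1 ∨ a = -1 := by
      rcases lt_or_gt_of_ne hx0 with h | h
      · right; rw [ha, Real.sign_of_neg h]
      · left; rw [ha, Real.sign_of_pos h]
    rcases haval with h | h <;> rw [h] <;> simp [pow_succ] <;> ring
  have key : ∀ m : ℕ, 1 ≤ f m ∧ f m ≤ f (m + 1) := by
    intro m
    induction m with
    | zero =>
      constructor
      · rw [hf0]
      · rw [hf0, hf1]; linarith
    | succ k ih =>
      obtain ⟨h1, h2⟩ := ih
      have h3 : 1 ≤ f (k + 1) := le_trans h1 h2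
      refine ⟨h3, ?_⟩
      rw [hrecf k]
      nlinarith
  have key2 : 2 < |x| → ∀ m : ℕ, 1 ≤ m → 1 < f m := by
    intro hx2 m hm
    induction m with
    | zero => omega
    | succ k ih =>
      rcases Nat.eq_zero_or_pos k with hk | hk
      · subst hk; rw [hf1]; linarith
      · have h1 : 1 < f k := ih hk
        have h2 := (key k).2
        have : f (k + 1) = f (k - 1 + 2) := by congr 1; omega
        rw [this, hrecf (k - 1)]
        have e : k - 1 + 1 = k := by omega
        rw [e]
        have h4 := (key (k - 1)).2
        rw [e] at h4
        nlinarith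
  exact ⟨(key n).1, fun hx2 hn => key2 hx2 n hn⟩
end

section
/- For all m ∈ ℕ and all E, V ∈ ℝ: tr(M_{[0,0]}(E,V)·(M_{[0]}(E,V)·M_{[0,0]}(E,V))^m) = E·S_m(E-V) - 2·S_{m-1}(E-V). -/
/-!
`M_{[0]} M_{[0,0]}` is the Chebyshev transfer matrix `!![E - V, -1; 1, 0]`, and the `m`-th power of
`!![x, -1; 1, 0]` has entries `S_m, -S_{m-1}; S_{m-1}, -S_{m-2}` by the three-term recurrence.
Multiplying by `M_{[0,0]}` and taking the trace gives `E S_m - 2 S_{m-1}`.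
-/

section TransferMatrix

variable {R : Type*} [CommRing R]

theorem transferMatrix_mul_of_recurrence (x : R) (u : ℤ → R)
    (hu : ∀ n : ℤ, u (n + 1) = x * u n - u (n - 1)) (n : ℤ) :
    !![x, -1; 1, 0] * !![u n, -u (n - 1); u (n - 1), -u (n - 2)]
      = !![u (n + 1), -u n; u n, -u (n - 1)] := by
  have hprev : u n = x * u (n - 1) - u (n - 2) := by
    simpa [show n - 1 - 1 = n - 2 by ring] using hu (n - 1)
  rw [Matrix.mul_fin_two, hu n, hprev]
  congr <;> ring

theorem transferMatrix_pow_of_recurrence (x : R) (u : ℤ → R)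
    (hu_neg_one : u (-1) = 0) (hu_zero : u 0 = 1)
    (hu : ∀ n : ℤ, u (n + 1) = x * u n - u (n - 1)) (m : ℕ) :
    !![x, -1; 1, 0] ^ m = !![u m, -u (m - 1); u (m - 1), -u (m - 2)] := by
  induction m with
  | zero =>
    have hu_neg_two : u (-2) = -1 := by
      have h := hu (-1)
      norm_num [hu_neg_one, hu_zero] at h
      linear_combination h
    rw [pow_zero, Matrix.one_fin_two]
    norm_num [hu_neg_one, hu_zero, hu_neg_two]
  | succ m ih =>
    rw [pow_succ', ih, transferMatrix_mul_of_recurrence x u hu]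
    push_cast
    ring_nf

end TransferMatrix

/-- For all `m ∈ ℕ` and all `E, V ∈ ℝ`:
`tr(M_{[0,0]}(E,V) · (M_{[0]}(E,V) · M_{[0,0]}(E,V))^m) = E·S_m(E-V) - 2·S_{m-1}(E-V)`,
with `M_{[0]} = [[1,-V],[0,1]]`, `M_{[0,0]} = [[E,-1],[1,0]]`, and `S : ℤ → ℝ → ℝ`
the family of dilated Chebyshev polynomials of the second kind
(`S_{-1} = 0`, `S_0 = 1`, `S_{n+1}(x) = x S_n(x) - S_{n-1}(x)`). -/
theorem trace_zero_zero_one_m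
    (S : ℤ → ℝ → ℝ)
    (hSm1 : ∀ x : ℝ, S (-1) x = 0)
    (hS0 : ∀ x : ℝ, S 0 x = 1)
    (hrec : ∀ (n : ℤ) (x : ℝ), S (n + 1) x = x * S n x - S (n - 1) x)
    (m : ℕ) (E V : ℝ) :
    Matrix.trace ((!![E, -1; 1, 0] : Matrix (Fin 2) (Fin 2) ℝ)
        * ((!![1, -V; 0, 1] : Matrix (Fin 2) (Fin 2) ℝ)
            * (!![E, -1; 1, 0] : Matrix (Fin 2) (Fin 2) ℝ)) ^ m)
      = E * S (m : ℤ) (E - V) - 2 * S ((m : ℤ) - 1) (E - V) := by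
  have hprod : (!![1, -V; 0, 1] : Matrix (Fin 2) (Fin 2) ℝ) * !![E, -1; 1, 0]
      = !![E - V, -1; 1, 0] := by
    rw [Matrix.mul_fin_two]
    congr <;> ring
  rw [hprod, transferMatrix_pow_of_recurrence (E - V) (S · (E - V)) (hSm1 _) (hS0 _)
    (fun n => hrec n _), Matrix.mul_fin_two, Matrix.trace_fin_two]
  simp only [Matrix.of_apply, Matrix.cons_val', Matrix.cons_val_zero, Matrix.cons_val_one,
    Matrix.empty_val', Matrix.cons_val_fin_one]
  ring
end

section
/- Suppose the real sequences (t_n)_{n≥0} satisfy the recursion t_{n+1} = a·t_n - t_{n-1} with |a| = 2. If |t_1| > |t_0| > 0, then the sequence (|t_n|)_{n≥1} is strictly increasing: |t_{n+1}| > |t_n| for all n ≥ 1. -/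
/-! At `|a| = 2` the recursion is degenerate: with `s = a / 2 = ±1` the rescaled sequence
`sⁿ tₙ` has the same absolute values and satisfies `u_{n+2} = 2 u_{n+1} - u_n`, so it is an
arithmetic progression `x + n d`. Then `(x + (n+1)d)² - (x + nd)² = ((x+d)² - x²) + 2n d²`,
which is positive once `|x + d| > |x|`. -/

theorem pow_mul_recurrence {R : Type*} [CommRing R] {a s : R} {t : ℕ → R} (hs : s ^ 2 = 1)
    (h : ∀ n, t (n + 2) = a * t (n + 1) - t n) (n : ℕ) :
    s ^ (n + 2) * t (n + 2) = s * a * (s ^ (n + 1) * t (n + 1)) - s ^ n * t n := by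
  rw [h]
  linear_combination (-(s ^ n * t n)) * hs

theorem eq_add_mul_of_recurrence_two {R : Type*} [CommRing R] {u : ℕ → R}
    (h : ∀ n, u (n + 2) = 2 * u (n + 1) - u n) (n : ℕ) :
    u n = u 0 + n * (u 1 - u 0) := by
  induction n using Nat.twoStepInduction with
  | zero => simp
  | one => simp
  | more n ih₀ ih₁ =>
    rw [h, ih₁, ih₀]
    push_cast
    ring

theorem abs_add_mul_lt_abs_add_succ_mul {R : Type*} [CommRing R] [LinearOrder R]
    [IsStrictOrderedRing R] {x d : R} (h : |x| < |x + d|) (n : ℕ) :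
    |x + n * d| < |x + (n + 1) * d| := by
  rw [← sq_lt_sq] at h ⊢
  have hdiff : (x + (n + 1) * d) ^ 2 - (x + n * d) ^ 2 = ((x + d) ^ 2 - x ^ 2) + 2 * n * d ^ 2 := by
    ring
  have hnonneg : 0 ≤ 2 * (n : R) * d ^ 2 := by positivity
  linarith

theorem trace_recursion_strict_mono_general
    (a : ℝ) (ha : |a| = 2) (t : ℕ → ℝ)
    (hrec : ∀ n : ℕ, t (n + 2) = a * t (n + 1) - t n)
    (h10 : |t 1| > |t 0|) :
    ∀ n : ℕ, 1 ≤ n → |t (n + 1)| > |t n| := by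
  intro n _
  set s := a / 2
  have hs : |s| = 1 := by rw [abs_div, ha]; norm_num
  have hs2 : s ^ 2 = 1 := by rw [← sq_abs, hs, one_pow]
  have hsa : s * a = 2 := by rw [show a = 2 * s by ring]; linear_combination 2 * hs2
  set u : ℕ → ℝ := fun n => s ^ n * t n
  have habs (n : ℕ) : |u n| = |t n| := by simp [u, abs_mul, abs_pow, hs]
  have hu (n : ℕ) : u (n + 2) = 2 * u (n + 1) - u n := hsa ▸ pow_mul_recurrence hs2 hrec n
  have hu₁ : |u 0| < |u 0 + (u 1 - u 0)| := by rw [add_sub_cancel, habs, habs]; exact h10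
  rw [gt_iff_lt, ← habs, ← habs, eq_add_mul_of_recurrence_two hu n,
    eq_add_mul_of_recurrence_two hu (n + 1), Nat.cast_succ]
  exact abs_add_mul_lt_abs_add_succ_mul hu₁ n

/-- Suppose the real sequence `(t_n)_{n≥0}` satisfies the
recursion `t_{n+1} = a·t_n - t_{n-1}` with `|a| = 2`. If `|t_1| > |t_0| > 0`,
then the sequence `(|t_n|)_{n≥1}` is strictly increasing:
`|t_{n+1}| > |t_n|` for all `n ≥ 1`. -/
theorem trace_recursion_strict_mono
    (a : ℝ) (ha : |a| = 2) (t : ℕ → ℝ)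
    (hrec : ∀ n : ℕ, t (n + 2) = a * t (n + 1) - t n)
    (h10 : |t 1| > |t 0|) (h0 : |t 0| > 0) :
    ∀ n : ℕ, 1 ≤ n → |t (n + 1)| > |t n| :=
  trace_recursion_strict_mono_general a ha t hrec h10
end

section
/- Let (t_n)_{n≥0} be real numbers satisfying t_{n+1} = a·t_n - t_{n-1} where |a| = 2, and suppose for every j ≥ 1 the sign condition sgn(a · t_{j-1} · t_j) = +1 holds together with the Fricke–Vogt relation a² + t_{j-1}² + t_j² - a·t_{j-1}·t_j = 4 + V² for V > 0, and |t_j| > |t_{j-1}| > 0 for all j ≥ 1. Then |t_n| - |t_0| = n·V for all n ≥ 0. -/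
/-!
Since `a t_j t_{j+1} > 0` and `|a| = 2`, we have `a t_j t_{j+1} = 2 |t_j| |t_{j+1}|`, so with
`a² = 4` the Fricke–Vogt relation collapses to `(|t_{j+1}| - |t_j|)² = V²`. Monotonicity of
`|t_j|` picks the positive root, so `|t_j|` increases by exactly `V` at every step, and the
claim follows by telescoping.
-/

lemma Real.pos_of_sign_eq_one {r : ℝ} (h : Real.sign r = 1) : 0 < r := by
  have hr : r ≠ 0 := by
    rintro rfl
    simp [Real.sign_zero] at h
  simpa [h] using Real.sign_mul_pos_of_ne_zero r hr

lemma sq_abs_sub_abs_eq_of_fricke_vogt {a x y V : ℝ} (ha : |a| = 2) (hpos : 0 < a * x * y)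
    (hFV : a ^ 2 + x ^ 2 + y ^ 2 - a * x * y = 4 + V ^ 2) :
    (|y| - |x|) ^ 2 = V ^ 2 := by
  have ha2 : a ^ 2 = 4 := by rw [← sq_abs, ha]; norm_num
  have hprod : a * x * y = 2 * |x| * |y| := by
    rw [← abs_of_pos hpos, abs_mul, abs_mul, ha]
  nlinarith [sq_abs x, sq_abs y]

lemma abs_sub_abs_eq_of_fricke_vogt {a x y V : ℝ} (ha : |a| = 2) (hV : 0 < V)
    (hpos : 0 < a * x * y) (hFV : a ^ 2 + x ^ 2 + y ^ 2 - a * x * y = 4 + V ^ 2)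
    (hxy : |x| < |y|) :
    |y| - |x| = V :=
  (sq_eq_sq₀ (sub_nonneg.mpr hxy.le) hV.le).mp (sq_abs_sub_abs_eq_of_fricke_vogt ha hpos hFV)

theorem trace_growth_linear_general
    (a V : ℝ) (ha : |a| = 2) (hV : 0 < V) (t : ℕ → ℝ)
    (hsign : ∀ j : ℕ, Real.sign (a * t j * t (j + 1)) = 1)
    (hFV : ∀ j : ℕ,
      a ^ 2 + t j ^ 2 + t (j + 1) ^ 2 - a * t j * t (j + 1) = 4 + V ^ 2)
    (hmono : ∀ j : ℕ, |t (j + 1)| > |t j| ∧ |t j| > 0) :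
    ∀ n : ℕ, |t n| - |t 0| = n * V := by
  have hstep : ∀ j : ℕ, |t (j + 1)| - |t j| = V := fun j =>
    abs_sub_abs_eq_of_fricke_vogt ha hV (Real.pos_of_sign_eq_one (hsign j)) (hFV j) (hmono j).1
  intro n
  rw [← Finset.sum_range_sub (fun j => |t j|)]
  simp [hstep]

/-- Let `(t_n)_{n≥0}` be real numbers satisfying
`t_{n+1} = a·t_n - t_{n-1}` where `|a| = 2`, and suppose for every `j ≥ 1` the sign
condition `sgn(a · t_{j-1} · t_j) = +1` holds together with the Fricke–Vogt relation
`a² + t_{j-1}² + t_j² - a·t_{j-1}·t_j = 4 + V²` for `V > 0`, and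
`|t_j| > |t_{j-1}| > 0` for all `j ≥ 1`. Then `|t_n| - |t_0| = n·V` for all `n ≥ 0`. -/
theorem trace_growth_linear
    (a V : ℝ) (ha : |a| = 2) (hV : 0 < V) (t : ℕ → ℝ)
    (hrec : ∀ n : ℕ, t (n + 2) = a * t (n + 1) - t n)
    (hsign : ∀ j : ℕ, Real.sign (a * t j * t (j + 1)) = 1)
    (hFV : ∀ j : ℕ,
      a ^ 2 + t j ^ 2 + t (j + 1) ^ 2 - a * t j * t (j + 1) = 4 + V ^ 2)
    (hmono : ∀ j : ℕ, |t (j + 1)| > |t j| ∧ |t j| > 0) :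
    ∀ n : ℕ, |t n| - |t 0| = n * V :=
  trace_growth_linear_general a V ha hV t hsign hFV hmono
end

section
/- Let q_{-1} = 0, q_0 = 1, and q_n = c_n·q_{n-1} + q_{n-2} for n ≥ 1 with c_n ∈ ℕ, c_n ≥ 1. Define N_k^A and N_k^B recursively by N_0^A = 1, N_0^B = 0, N_1^A = c_1 - 1, N_1^B = 1, N_{k+1}^A = (c_{k+1}-1)·N_k^A + c_{k+1}·N_k^B, and N_{k+1}^B = c_k·N_{k-1}^A + (c_k+1)·N_{k-1}^B. Then for all k ≥ 0: N_k^A = q_k - q_{k-1} and N_k^B = q_{k-1}. -/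
/-!
The pair `(q (k+1) - q k, q k)` obeys the same two recurrences as `(N^A, N^B)`: both identities
are rearrangements of `q (k+2) = c (k+1) * q (k+1) + q k`, the truncated subtraction being harmless
because `q` is monotone. Since the recurrences determine a solution from `N^A 0`, `N^B 0` and
`N^B 1`, the two pairs coincide.
-/

/-- The recurrences defining the level counts `N^A`, `N^B` of the spectral α-tree. -/
def TreeRecurrence (c A B : ℕ → ℕ) : Prop :=
  (∀ k, A (k + 1) = (c (k + 1) - 1) * A k + c (k + 1) * B k) ∧
    ∀ k, B (k + 2) = c (k + 1) * A k + (c (k + 1) + 1) * B k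

theorem TreeRecurrence.eq {c A B A' B' : ℕ → ℕ} (h : TreeRecurrence c A B)
    (h' : TreeRecurrence c A' B') (hA0 : A 0 = A' 0) (hB0 : B 0 = B' 0) (hB1 : B 1 = B' 1) :
    A = A' ∧ B = B' := by
  have key : ∀ k, (A k = A' k ∧ B k = B' k) ∧ B (k + 1) = B' (k + 1) := by
    intro k
    induction k with
    | zero => exact ⟨⟨hA0, hB0⟩, hB1⟩
    | succ k ih =>
      obtain ⟨⟨hA, hB⟩, hB_succ⟩ := ih
      refine ⟨⟨?_, hB_succ⟩, ?_⟩
      · rw [h.1, h'.1, hA, hB]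
      · rw [h.2, h'.2, hA, hB]
  exact ⟨funext fun k => (key k).1.1, funext fun k => (key k).1.2⟩

theorem monotone_of_continuant {c q : ℕ → ℕ} (hc : ∀ n, 1 ≤ n → 1 ≤ c n) (hq0 : q 0 = 0)
    (hqrec : ∀ n, q (n + 2) = c (n + 1) * q (n + 1) + q n) : Monotone q := by
  refine monotone_nat_of_le_succ fun n => ?_
  cases n with
  | zero => simp [hq0]
  | succ n =>
    rw [hqrec n]
    nlinarith [hc (n + 1) n.succ_pos]

theorem treeRecurrence_continuant {c q : ℕ → ℕ} (hc : ∀ n, 1 ≤ n → 1 ≤ c n) (hq0 : q 0 = 0)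
    (hqrec : ∀ n, q (n + 2) = c (n + 1) * q (n + 1) + q n) :
    TreeRecurrence c (fun k => q (k + 1) - q k) q := by
  have hmono := monotone_of_continuant hc hq0 hqrec
  refine ⟨fun k => ?_, fun k => ?_⟩ <;> dsimp only <;>
    obtain ⟨d, hd⟩ := Nat.exists_eq_add_of_le' (hmono (Nat.le_add_right k 1))
  · obtain ⟨m, hm⟩ := Nat.exists_eq_add_of_le' (hc (k + 1) k.succ_pos)
    rw [hqrec k, hm, hd, Nat.add_sub_cancel, Nat.add_sub_cancel, Nat.sub_eq_of_eq_add]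
    ring
  · rw [hqrec k, hd, Nat.add_sub_cancel]
    ring

theorem tree_vertex_counts_general
    (c : ℕ → ℕ) (hc : ∀ n : ℕ, 1 ≤ n → 1 ≤ c n)
    (q NA NB : ℕ → ℕ)
    (hq0 : q 0 = 0) (hq1 : q 1 = 1)
    (hqrec : ∀ n : ℕ, q (n + 2) = c (n + 1) * q (n + 1) + q n)
    (hNA0 : NA 0 = 1) (hNB0 : NB 0 = 0)
    (hNB1 : NB 1 = 1)
    (hNArec : ∀ k : ℕ, NA (k + 1) = (c (k + 1) - 1) * NA k + c (k + 1) * NB k)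
    (hNBrec : ∀ k : ℕ, NB (k + 2) = c (k + 1) * NA k + (c (k + 1) + 1) * NB k) :
    ∀ k : ℕ, NA k = q (k + 1) - q k ∧ NB k = q k := by
  obtain ⟨hA, hB⟩ := TreeRecurrence.eq ⟨hNArec, hNBrec⟩ (treeRecurrence_continuant hc hq0 hqrec)
    (by simp [hNA0, hq0, hq1]) (hNB0.trans hq0.symm) (hNB1.trans hq1.symm)
  exact fun k => ⟨congrFun hA k, congrFun hB k⟩

/-- Let `q_{-1} = 0`, `q_0 = 1`, and `q_n = c_n·q_{n-1} + q_{n-2}`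
for `n ≥ 1` with `c_n ∈ ℕ`, `c_n ≥ 1`. Define `N_k^A` and `N_k^B` recursively by
`N_0^A = 1`, `N_0^B = 0`, `N_1^A = c_1 - 1`, `N_1^B = 1`,
`N_{k+1}^A = (c_{k+1}-1)·N_k^A + c_{k+1}·N_k^B`, and
`N_{k+1}^B = c_k·N_{k-1}^A + (c_k+1)·N_{k-1}^B` (for `k ≥ 1`). Then for all
`k ≥ 0`: `N_k^A = q_k - q_{k-1}` and `N_k^B = q_{k-1}`.
(Here `q : ℕ → ℕ` is the index-shifted sequence `q k = q_{k-1}`, so that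
`q 0 = q_{-1} = 0` and `q (k+1) = q_k`.) -/
theorem tree_vertex_counts
    (c : ℕ → ℕ) (hc : ∀ n : ℕ, 1 ≤ n → 1 ≤ c n)
    (q NA NB : ℕ → ℕ)
    (hq0 : q 0 = 0) (hq1 : q 1 = 1)
    (hqrec : ∀ n : ℕ, q (n + 2) = c (n + 1) * q (n + 1) + q n)
    (hNA0 : NA 0 = 1) (hNB0 : NB 0 = 0)
    (hNA1 : NA 1 = c 1 - 1) (hNB1 : NB 1 = 1)
    (hNArec : ∀ k : ℕ, NA (k + 1) = (c (k + 1) - 1) * NA k + c (k + 1) * NB k)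
    (hNBrec : ∀ k : ℕ, NB (k + 2) = c (k + 1) * NA k + (c (k + 1) + 1) * NB k) :
    ∀ k : ℕ, NA k = q (k + 1) - q k ∧ NB k = q k :=
  tree_vertex_counts_general c hc q NA NB hq0 hq1 hqrec hNA0 hNB0 hNB1 hNArec hNBrec
end
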